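/- For all integers k, j, l, m, define ρ(l,m) = min{max(|l−k|,|m−j|), max(|l−j|,|m−k|)} and ρ*(l,m) = max{min(|k−l|,|k−m|,|j−l|,|j−m|), min(|l−k|,|l−j|,|l−m|), min(|m−k|,|m−j|,|m−l|), min(|k−l|,|k−m|,|k−j|), min(|j−l|,|j−m|,|j−k|)}. Then ρ(l,m) ≤ 2ρ*(l,m) for all integers k, j, l, m. -/
import Mathlib

set_option maxHeartbeats 1000000 in
/-- Abstract core: the inequality for six nonnegative "distances" satisfying
the relevant triangle inequalities. -/
lemma key17 (a b c d e f : ℤ) (ha : 0 ≤ a) (hb : 0 ≤ b) (hc : 0 ≤ c) (hd : 0 ≤ d)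
    (t2 : a ≤ e + d) (t3 : d ≤ e + a) (t5 : c ≤ e + b) (t6 : b ≤ e + c)
    (t7 : a ≤ c + f) (t8 : c ≤ a + f) (t10 : d ≤ b + f) (t11 : b ≤ d + f) :
    min (max a b) (max c d) ≤
      2 * max (max (max (min (min (min a d) c) b) (min (min a c) e))
          (min (min d b) e))
        (max (min (min a d) f) (min (min c b) f)) := by
  have l1 : min (min (min a d) c) b ≤
      max (max (max (min (min (min a d) c) b) (min (min a c) e))
          (min (min d b) e)) (max (min (min a d) f) (min (min c b) f)) :=
    le_trans (le_max_left _ _) (le_trans (le_max_left _ _) (le_max_left _ _))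
  have l2 : min (min a c) e ≤
      max (max (max (min (min (min a d) c) b) (min (min a c) e))
          (min (min d b) e)) (max (min (min a d) f) (min (min c b) f)) :=
    le_trans (le_max_right _ _) (le_trans (le_max_left _ _) (le_max_left _ _))
  have l3 : min (min d b) e ≤
      max (max (max (min (min (min a d) c) b) (min (min a c) e))
          (min (min d b) e)) (max (min (min a d) f) (min (min c b) f)) :=
    le_trans (le_max_right _ _) (le_max_left _ _)
  have l4 : min (min a d) f ≤
      max (max (max (min (min (min a d) c) b) (min (min a c) e))
          (min (min d b) e)) (max (min (min a d) f) (min (min c b) f)) :=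
    le_trans (le_max_left _ _) (le_max_right _ _)
  have l5 : min (min c b) f ≤
      max (max (max (min (min (min a d) c) b) (min (min a c) e))
          (min (min d b) e)) (max (min (min a d) f) (min (min c b) f)) :=
    le_trans (le_max_right _ _) (le_max_right _ _)
  have mL : min (max a b) (max c d) ≤ max a b := min_le_left _ _
  have mR : min (max a b) (max c d) ≤ max c d := min_le_right _ _
  rcases le_total (max a b) (max c d) with h | h
  · -- focus on max a b
    rcases le_total a b with hab | hab
    · -- focus b ; b ≤ max c d
      have hbm : b ≤ max c d := le_trans (le_max_right a b) h
      rcases le_max_iff.mp hbm with h1 | h1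
      · -- b ≤ c : use f
        rcases le_total b (2 * f) with h2 | h2
        · have hx : b ≤ 2 * min (min c b) f := by clear l1 l2 l3 l4 l5 mL mR; omega
          have hy : max a b ≤ b := max_le hab le_rfl
          linarith
        · -- 2f < b : use M1
          have hx : b ≤ 2 * min (min (min a d) c) b := by clear l1 l2 l3 l4 l5 mL mR; omega
          have hy : max a b ≤ b := max_le hab le_rfl
          linarith
      · -- b ≤ d : use e
        rcases le_total b (2 * e) with h2 | h2
        · have hx : b ≤ 2 * min (min d b) e := by clear l1 l2 l3 l4 l5 mL mR; omega
          have hy : max a b ≤ b := max_le hab le_rfl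
          linarith
        · have hx : b ≤ 2 * min (min (min a d) c) b := by clear l1 l2 l3 l4 l5 mL mR; omega
          have hy : max a b ≤ b := max_le hab le_rfl
          linarith
    · -- focus a ; a ≤ max c d
      have ham : a ≤ max c d := le_trans (le_max_left a b) h
      rcases le_max_iff.mp ham with h1 | h1
      · -- a ≤ c : use e
        rcases le_total a (2 * e) with h2 | h2
        · have hx : a ≤ 2 * min (min a c) e := by clear l1 l2 l3 l4 l5 mL mR; omega
          have hy : max a b ≤ a := max_le le_rfl hab
          linarith
        · have hx : a ≤ 2 * min (min (min a d) c) b := by clear l1 l2 l3 l4 l5 mL mR; omega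
          have hy : max a b ≤ a := max_le le_rfl hab
          linarith
      · -- a ≤ d : use f
        rcases le_total a (2 * f) with h2 | h2
        · have hx : a ≤ 2 * min (min a d) f := by clear l1 l2 l3 l4 l5 mL mR; omega
          have hy : max a b ≤ a := max_le le_rfl hab
          linarith
        · have hx : a ≤ 2 * min (min (min a d) c) b := by clear l1 l2 l3 l4 l5 mL mR; omega
          have hy : max a b ≤ a := max_le le_rfl hab
          linarith
  · -- focus on max c d
    rcases le_total c d with hcd | hcd
    · -- focus d ; d ≤ max a b
      have hdm : d ≤ max a b := le_trans (le_max_right c d) h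
      rcases le_max_iff.mp hdm with h1 | h1
      · -- d ≤ a : use f
        rcases le_total d (2 * f) with h2 | h2
        · have hx : d ≤ 2 * min (min a d) f := by clear l1 l2 l3 l4 l5 mL mR; omega
          have hy : max c d ≤ d := max_le hcd le_rfl
          linarith
        · have hx : d ≤ 2 * min (min (min a d) c) b := by clear l1 l2 l3 l4 l5 mL mR; omega
          have hy : max c d ≤ d := max_le hcd le_rfl
          linarith
      · -- d ≤ b : use e
        rcases le_total d (2 * e) with h2 | h2
        · have hx : d ≤ 2 * min (min d b) e := by clear l1 l2 l3 l4 l5 mL mR; omega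
          have hy : max c d ≤ d := max_le hcd le_rfl
          linarith
        · have hx : d ≤ 2 * min (min (min a d) c) b := by clear l1 l2 l3 l4 l5 mL mR; omega
          have hy : max c d ≤ d := max_le hcd le_rfl
          linarith
    · -- focus c ; c ≤ max a b
      have hcm : c ≤ max a b := le_trans (le_max_left c d) h
      rcases le_max_iff.mp hcm with h1 | h1
      · -- c ≤ a : use e
        rcases le_total c (2 * e) with h2 | h2
        · have hx : c ≤ 2 * min (min a c) e := by clear l1 l2 l3 l4 l5 mL mR; omega
          have hy : max c d ≤ c := max_le le_rfl hcd
          linarith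
        · have hx : c ≤ 2 * min (min (min a d) c) b := by clear l1 l2 l3 l4 l5 mL mR; omega
          have hy : max c d ≤ c := max_le le_rfl hcd
          linarith
      · -- c ≤ b : use f
        rcases le_total c (2 * f) with h2 | h2
        · have hx : c ≤ 2 * min (min c b) f := by clear l1 l2 l3 l4 l5 mL mR; omega
          have hy : max c d ≤ c := max_le le_rfl hcd
          linarith
        · have hx : c ≤ 2 * min (min (min a d) c) b := by clear l1 l2 l3 l4 l5 mL mR; omega
          have hy : max c d ≤ c := max_le le_rfl hcd
          linarith

/-- The key combinatorial inequality (eq. 14) in Zhou (2014): for all integers `k, j, l, m`,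
`ρ(l,m) ≤ 2 ρ*(l,m)`, where
`ρ(l,m) = min{max(|l−k|,|m−j|), max(|l−j|,|m−k|)}` and
`ρ*(l,m)` is the maximum of the five minima listed in the paper. -/
theorem stmt17 (k j l m : ℤ) :
    min (max |l - k| |m - j|) (max |l - j| |m - k|) ≤
      2 * max (max (max (min (min (min |k - l| |k - m|) |j - l|) |j - m|)
            (min (min |l - k| |l - j|) |l - m|))
          (min (min |m - k| |m - j|) |m - l|))
        (max (min (min |k - l| |k - m|) |k - j|)
          (min (min |j - l| |j - m|) |j - k|)) := by
  simp only [abs_sub_comm k l, abs_sub_comm k m, abs_sub_comm j l,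
    abs_sub_comm j m, abs_sub_comm j k, abs_sub_comm m l]
  refine key17 _ _ _ _ _ _ (abs_nonneg _) (abs_nonneg _) (abs_nonneg _) (abs_nonneg _)
    ?_ ?_ ?_ ?_ ?_ ?_ ?_ ?_
  · exact abs_sub_le l m k
  · rw [abs_sub_comm l m]; exact abs_sub_le m l k
  · exact abs_sub_le l m j
  · rw [abs_sub_comm l m]; exact abs_sub_le m l j
  · rw [abs_sub_comm k j]; exact abs_sub_le l j k
  · exact abs_sub_le l k j
  · rw [abs_sub_comm k j]; exact abs_sub_le m j k
  · exact abs_sub_le m k j
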